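/- Let G be a finite group with a representation ρ on ℝ^{d0}, X ∈ ℝ^{d0×n}, Y ∈ ℝ^{dL×n}, and assume Σ_{g∈G} ρ(g) X X^T ρ(g)^T is positive definite with positive definite square root Q. Let Ḡ = (1/|G|) Σ_{g∈G} ρ(g) and Z̄ = |G| · Y X^T Ḡ^T Q^{-1}, with SVD Z̄ = Ū Σ̄ V̄^T (singular values nonincreasing). Then Ŵ = Ū_r Σ̄_r V̄_r^T Q^{-1} is a minimizer of (1/(n|G|)) Σ_{g∈G} ‖W ρ(g) X − Y‖_F² over all W ∈ ℝ^{dL×d0} with rank(W) ≤ r. Moreover, if ρ(g)^T ρ(g) = I_{d0} for all g ∈ G, then Ŵ is invariant: Ŵ ρ(h) = Ŵ for all h ∈ G. -/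

import Mathlib

open Matrix

/-- Squared Frobenius norm. -/
def frobSq {m n : Type*} [Fintype m] [Fintype n] (M : Matrix m n ℝ) : ℝ :=
  ∑ i, ∑ j, (M i j) ^ 2

/-- The `n × m` "diagonal" matrix with entries `sv 0, sv 1, …` on the main diagonal. -/
def pdiag (n m : ℕ) (sv : ℕ → ℝ) : Matrix (Fin n) (Fin m) ℝ :=
  Matrix.of fun i j => if (i : ℕ) = (j : ℕ) then sv i else 0

/-- The rank-`r` truncation of `pdiag`: only the first `r` diagonal entries are kept. -/
def pdiagTrunc (n m : ℕ) (sv : ℕ → ℝ) (r : ℕ) : Matrix (Fin n) (Fin m) ℝ :=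
  Matrix.of fun i j => if (i : ℕ) = (j : ℕ) ∧ (i : ℕ) < r then sv i else 0

lemma frobSq_eq_trace {m n : Type*} [Fintype m] [Fintype n] (M : Matrix m n ℝ) :
    frobSq M = trace (Mᵀ * M) := by
  simp [frobSq, trace, Matrix.mul_apply, Matrix.diag, transpose_apply, sq]
  rw [Finset.sum_comm]

lemma frobSq_eq_trace' {m n : Type*} [Fintype m] [Fintype n] (M : Matrix m n ℝ) :
    frobSq M = trace (M * Mᵀ) := by
  rw [frobSq_eq_trace, Matrix.trace_mul_comm]

lemma frobSq_conj {dL d0 : ℕ} (U : Matrix (Fin dL) (Fin dL) ℝ) (V : Matrix (Fin d0) (Fin d0) ℝ)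
    (hU : Uᵀ * U = 1) (hV : Vᵀ * V = 1) (M : Matrix (Fin dL) (Fin d0) ℝ) :
    frobSq (U * M * Vᵀ) = frobSq M := by
  have hV' : V * Vᵀ = 1 := mul_eq_one_comm.mp hV
  rw [frobSq_eq_trace, frobSq_eq_trace]
  rw [show (U * M * Vᵀ)ᵀ = V * Mᵀ * Uᵀ by simp [Matrix.mul_assoc]]
  rw [show V * Mᵀ * Uᵀ * (U * M * Vᵀ) = V * (Mᵀ * (Uᵀ * U) * M) * Vᵀ by
    simp only [Matrix.mul_assoc]]
  rw [hU, Matrix.mul_one, Matrix.trace_mul_comm, ← Matrix.mul_assoc, ← Matrix.mul_assoc, hV,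
    Matrix.one_mul]

lemma collapse {a b : ℕ} (i : Fin a) (c : ℕ → ℝ) :
    (∑ j : Fin b, if (i : ℕ) = (j : ℕ) then c j else 0) = if (i : ℕ) < b then c i else 0 := by
  by_cases h : (i : ℕ) < b
  · rw [if_pos h, Finset.sum_eq_single (⟨(i : ℕ), h⟩ : Fin b)]
    · simp
    · intro j _ hj
      rw [if_neg]
      intro hc
      exact hj (by ext; exact hc.symm)
    · simp
  · rw [if_neg h, Finset.sum_eq_zero]
    intro j _
    rw [if_neg]
    intro hc
    exact h (hc ▸ j.isLt)

-- scalar Ky Fan type inequality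
lemma kyfan {m r : ℕ} (a u : Fin m → ℝ) (ha : ∀ i j : Fin m, (i:ℕ) ≤ (j:ℕ) → a j ≤ a i)
    (ha0 : ∀ i, 0 ≤ a i) (hu0 : ∀ i, 0 ≤ u i) (hu1 : ∀ i, u i ≤ 1)
    (hsum : ∑ i, u i ≤ (r : ℝ)) :
    ∑ i, a i * u i ≤ ∑ i : Fin m, (if (i:ℕ) < r then a i else 0) := by
  set s : ℝ := if h : r < m then a ⟨r, h⟩ else 0 with hs
  have hs0 : 0 ≤ s := by
    rw [hs]; split
    · exact ha0 _
    · exact le_refl 0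
  have hlow : ∀ i : Fin m, (i:ℕ) < r → s ≤ a i := by
    intro i hi
    rw [hs]; split
    · exact ha i _ (le_of_lt hi)
    · exact ha0 i
  have hhigh : ∀ i : Fin m, ¬ (i:ℕ) < r → a i ≤ s := by
    intro i hi
    have hrm : r < m := lt_of_le_of_lt (not_lt.mp hi) i.isLt
    rw [hs, dif_pos hrm]
    exact ha ⟨r, hrm⟩ i (not_lt.mp hi)
  set c : ℝ := ∑ i : Fin m, (if (i:ℕ) < r then (1:ℝ) else 0) with hc
  have hucard : ∑ i, u i ≤ c := by
    by_cases hrm : r ≤ m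
    · refine hsum.trans ?_
      have : c = ∑ i : Fin m, (if (i:ℕ) < r then (1:ℝ) else 0) := hc
      rw [this, ← Finset.sum_filter]
      have hcard : (Finset.univ.filter (fun i : Fin m => (i:ℕ) < r)).card = r := by
        rw [show (Finset.univ.filter (fun i : Fin m => (i:ℕ) < r)) =
            Finset.map (Fin.castLEEmb hrm) Finset.univ from ?_]
        · simp
        · ext j
          simp only [Finset.mem_filter, Finset.mem_univ, true_and, Finset.mem_map,
            Fin.castLEEmb_apply]
          constructor
          · intro hj; exact ⟨⟨(j:ℕ), hj⟩, by ext; simp⟩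
          · rintro ⟨x, rfl⟩; simpa using x.isLt
      simp [hcard]
    · push_neg at hrm
      have : c = ∑ i : Fin m, (1:ℝ) := by
        rw [hc]
        refine Finset.sum_congr rfl fun i _ => ?_
        rw [if_pos (lt_trans i.isLt hrm)]
      rw [this]
      simp only [Finset.sum_const, Finset.card_univ, Fintype.card_fin, nsmul_eq_mul, mul_one]
      exact Finset.sum_le_card_nsmul Finset.univ u 1 (fun i _ => hu1 i) |>.trans (by simp)
  have key : ∀ i : Fin m, a i * u i ≤
      (if (i:ℕ) < r then a i else 0) + s * (u i - if (i:ℕ) < r then 1 else 0) := by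
    intro i
    by_cases hi : (i:ℕ) < r
    · simp only [if_pos hi]
      have h1 : u i - 1 ≤ 0 := by linarith [hu1 i]
      nlinarith [hlow i hi, hu1 i, hu0 i]
    · simp only [if_neg hi]
      have := hhigh i hi
      nlinarith [hu0 i]
  calc ∑ i, a i * u i
      ≤ ∑ i : Fin m, ((if (i:ℕ) < r then a i else 0) + s * (u i - if (i:ℕ) < r then 1 else 0)) :=
        Finset.sum_le_sum fun i _ => key i
    _ = (∑ i : Fin m, (if (i:ℕ) < r then a i else 0)) + s * ((∑ i, u i) - c) := by
        rw [Finset.sum_add_distrib, ← Finset.mul_sum]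
        congr 1
        rw [Finset.sum_sub_distrib, hc]
    _ ≤ ∑ i : Fin m, (if (i:ℕ) < r then a i else 0) := by
        nlinarith [hucard, hs0]

lemma exists_O {dL d0 r : ℕ} (C : Matrix (Fin dL) (Fin d0) ℝ) (hC : C.rank ≤ r) :
    ∃ (k : ℕ) (O : Matrix (Fin dL) (Fin k) ℝ), k ≤ r ∧ Oᵀ * O = 1 ∧ O * Oᵀ * C = C := by
  classical
  set K : Submodule ℝ (EuclideanSpace ℝ (Fin dL)) := LinearMap.range (Matrix.toEuclideanLin C)
    with hK
  have hrank : C.rank = Module.finrank ℝ K := by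
    rw [Matrix.rank_eq_finrank_range_toLin C (PiLp.basisFun 2 ℝ (Fin dL))
      (PiLp.basisFun 2 ℝ (Fin d0))]
    rfl
  set k := Module.finrank ℝ K with hk
  have hkle : k ≤ r := hrank ▸ hC
  let b : OrthonormalBasis (Fin k) ℝ K := stdOrthonormalBasis ℝ K
  set O : Matrix (Fin dL) (Fin k) ℝ := Matrix.of (fun i j => ((b j : EuclideanSpace ℝ (Fin dL)) i))
    with hO
  refine ⟨k, O, hkle, ?_, ?_⟩
  · ext j j'
    have := b.orthonormal
    rw [orthonormal_iff_ite] at this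
    have h2 := this j j'
    rw [Submodule.coe_inner] at h2
    rw [PiLp.inner_apply] at h2
    simp only [RCLike.inner_apply, conj_trivial] at h2
    simp only [Matrix.mul_apply, Matrix.transpose_apply, hO, Matrix.of_apply, Matrix.one_apply]
    rw [← h2]
    exact Finset.sum_congr rfl fun _ _ => mul_comm _ _
  · ext i c
    have hcol : (WithLp.toLp 2 (fun i' => C i' c)) ∈ K := by
      rw [hK]
      refine ⟨(WithLp.equiv 2 (Fin d0 → ℝ)).symm (Pi.single c 1), ?_⟩
      ext i'
      show (C *ᵥ Pi.single c 1) i' = C i' c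
      simp [Matrix.mulVec_single]
    set x : K := ⟨WithLp.toLp 2 (fun i' => C i' c), hcol⟩ with hx
    have hrepr : ∀ j, b.repr x j = ∑ i', (b j : EuclideanSpace ℝ (Fin dL)) i' * C i' c := by
      intro j
      rw [b.repr_apply_apply]
      rw [Submodule.coe_inner, PiLp.inner_apply]
      simp only [RCLike.inner_apply, conj_trivial]
      exact Finset.sum_congr rfl fun _ _ => mul_comm _ _
    have hsum := b.sum_repr x
    have hsum' : ∑ j, b.repr x j • (b j : EuclideanSpace ℝ (Fin dL))
        = (x : EuclideanSpace ℝ (Fin dL)) := by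
      have h0 : ((∑ j, b.repr x j • b j : K) : EuclideanSpace ℝ (Fin dL))
          = (x : EuclideanSpace ℝ (Fin dL)) := congrArg _ hsum
      rw [Submodule.coe_sum] at h0
      simpa using h0
    have happ : (∑ j, b.repr x j • (b j : EuclideanSpace ℝ (Fin dL))) i = C i c := by
      rw [hsum']
    calc (O * Oᵀ * C) i c = ∑ i', (∑ j, O i j * O i' j) * C i' c := by
          simp [Matrix.mul_apply, Matrix.transpose_apply]
      _ = ∑ i', ∑ j, O i j * (O i' j * C i' c) := by
          refine Finset.sum_congr rfl fun i' _ => ?_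
          rw [Finset.sum_mul]
          exact Finset.sum_congr rfl fun j _ => by ring
      _ = ∑ j, O i j * (∑ i', O i' j * C i' c) := by
          rw [Finset.sum_comm]
          exact Finset.sum_congr rfl fun j _ => by rw [Finset.mul_sum]
      _ = ∑ j, b.repr x j * (b j : EuclideanSpace ℝ (Fin dL)) i := by
          refine Finset.sum_congr rfl fun j _ => ?_
          rw [hrepr j]
          simp only [hO, Matrix.of_apply]
          ring
      _ = C i c := by
          rw [← happ]
          rw [WithLp.ofLp_sum, Finset.sum_apply]
          exact Finset.sum_congr rfl fun j _ => rfl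

lemma dcollapse {a b : ℕ} (i : Fin a) (c : Fin b → ℝ) :
    (∑ j : Fin b, if (i : ℕ) = (j : ℕ) then c j else 0)
      = if h : (i : ℕ) < b then c ⟨i, h⟩ else 0 := by
  by_cases h : (i : ℕ) < b
  · rw [dif_pos h, Finset.sum_eq_single (⟨(i : ℕ), h⟩ : Fin b)]
    · simp
    · intro j _ hj
      rw [if_neg]
      intro hc
      exact hj (by ext; exact hc.symm)
    · simp
  · rw [dif_neg h, Finset.sum_eq_zero]
    intro j _
    rw [if_neg]
    intro hc
    exact h (hc ▸ j.isLt)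

lemma dcollapse' {a b : ℕ} (j : Fin b) (c : Fin a → ℝ) :
    (∑ i : Fin a, if (i : ℕ) = (j : ℕ) then c i else 0)
      = if h : (j : ℕ) < a then c ⟨j, h⟩ else 0 := by
  rw [← dcollapse j c]
  exact Finset.sum_congr rfl fun i _ => by
    congr 1
    exact propext eq_comm

lemma frobSq_nonneg {m n : Type*} [Fintype m] [Fintype n] (M : Matrix m n ℝ) : 0 ≤ frobSq M :=
  Finset.sum_nonneg fun i _ => Finset.sum_nonneg fun j _ => sq_nonneg _

lemma frob_orth_add {m n : Type*} [Fintype m] [Fintype n] [DecidableEq m]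
    (A B : Matrix m n ℝ) (h : Aᵀ * B = 0) :
    frobSq (A + B) = frobSq A + frobSq B := by
  have hBA : Bᵀ * A = 0 := by
    have := congrArg Matrix.transpose h
    simpa [Matrix.transpose_mul] using this
  rw [frobSq_eq_trace, frobSq_eq_trace, frobSq_eq_trace, Matrix.transpose_add, Matrix.add_mul,
    Matrix.mul_add, Matrix.mul_add, h, hBA]
  simp [Matrix.trace_add]

lemma trace_pdiag_conj {dL d0 : ℕ} (sv : ℕ → ℝ) (M : Matrix (Fin dL) (Fin dL) ℝ) :
    trace ((pdiag dL d0 sv)ᵀ * (M * pdiag dL d0 sv))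
      = ∑ j : Fin d0, (if h : (j : ℕ) < dL then sv j ^ 2 * M ⟨j, h⟩ ⟨j, h⟩ else 0) := by
  rw [Matrix.trace]
  refine Finset.sum_congr rfl fun j _ => ?_
  have hinner : ∀ i : Fin dL, (M * pdiag dL d0 sv) i j
      = if h : (j : ℕ) < dL then M i ⟨j, h⟩ * sv j else 0 := by
    intro i
    rw [Matrix.mul_apply]
    rw [show (∑ i' : Fin dL, M i i' * pdiag dL d0 sv i' j)
        = ∑ i' : Fin dL, if (i' : ℕ) = (j : ℕ) then M i i' * sv i' else 0 from
      Finset.sum_congr rfl fun i' _ => by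
        simp only [pdiag, Matrix.of_apply]
        split <;> simp_all]
    rw [dcollapse' j (fun i' => M i i' * sv i')]
  rw [Matrix.diag, Matrix.mul_apply]
  rw [show (∑ i : Fin dL, (pdiag dL d0 sv)ᵀ j i * (M * pdiag dL d0 sv) i j)
      = ∑ i : Fin dL, if (i : ℕ) = (j : ℕ) then
          sv i * (if h : (j : ℕ) < dL then M i ⟨j, h⟩ * sv j else 0) else 0 from
    Finset.sum_congr rfl fun i _ => by
      rw [hinner i]
      simp only [Matrix.transpose_apply, pdiag, Matrix.of_apply]
      split <;> simp_all]
  rw [dcollapse' j (fun i => sv i * (if h : (j : ℕ) < dL then M i ⟨j, h⟩ * sv j else 0))]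
  by_cases h : (j : ℕ) < dL
  · rw [dif_pos h, dif_pos h, dif_pos h]
    ring
  · rw [dif_neg h, dif_neg h]

lemma sum_swap_tri {a b : ℕ} (g : ℕ → ℝ) :
    ∑ i : Fin a, (if (i : ℕ) < b then g i else 0)
      = ∑ j : Fin b, (if (j : ℕ) < a then g j else 0) := by
  have e1 : ∀ i : Fin a, (if (i : ℕ) < b then g i else 0)
      = ∑ j : Fin b, (if (i : ℕ) = (j : ℕ) then g j else 0) := fun i => (collapse i g).symm
  have e2 : ∀ j : Fin b, (∑ i : Fin a, (if (i : ℕ) = (j : ℕ) then g i else 0))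
      = if (j : ℕ) < a then g j else 0 := by
    intro j
    rw [dcollapse' j (fun i => g i)]
    by_cases h : (j : ℕ) < a
    · rw [dif_pos h, if_pos h]
    · rw [dif_neg h, if_neg h]
  calc ∑ i : Fin a, (if (i : ℕ) < b then g i else 0)
      = ∑ i : Fin a, ∑ j : Fin b, (if (i : ℕ) = (j : ℕ) then g j else 0) :=
        Finset.sum_congr rfl fun i _ => e1 i
    _ = ∑ j : Fin b, ∑ i : Fin a, (if (i : ℕ) = (j : ℕ) then g j else 0) := Finset.sum_comm
    _ = ∑ j : Fin b, ∑ i : Fin a, (if (i : ℕ) = (j : ℕ) then g i else 0) := by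
        refine Finset.sum_congr rfl fun j _ => Finset.sum_congr rfl fun i _ => ?_
        split_ifs with h
        · rw [h]
        · rfl
    _ = ∑ j : Fin b, (if (j : ℕ) < a then g j else 0) :=
        Finset.sum_congr rfl fun j _ => e2 j

lemma ey_diag {dL d0 r : ℕ} (sv : ℕ → ℝ)
    (hsv_mono : ∀ i j : ℕ, i ≤ j → sv j ≤ sv i) (hsv_nonneg : ∀ i, 0 ≤ sv i)
    (C : Matrix (Fin dL) (Fin d0) ℝ) (hC : C.rank ≤ r) :
    frobSq (pdiag dL d0 sv - pdiagTrunc dL d0 sv r) ≤ frobSq (pdiag dL d0 sv - C) := by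
  classical
  obtain ⟨k, O, hk, hOO, hOC⟩ := exists_O C hC
  set D := pdiag dL d0 sv with hD
  set P : Matrix (Fin dL) (Fin dL) ℝ := O * Oᵀ with hP
  have hPt : Pᵀ = P := by rw [hP, Matrix.transpose_mul, Matrix.transpose_transpose]
  have hP2 : P * P = P := by
    rw [hP, Matrix.mul_assoc, ← Matrix.mul_assoc Oᵀ O Oᵀ, hOO, Matrix.one_mul]
  have hPC : P * C = C := by rw [hP]; exact hOC
  have hQidem : (1 - P) * (1 - P) = (1 - P : Matrix (Fin dL) (Fin dL) ℝ) := by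
    rw [Matrix.mul_sub, Matrix.sub_mul, Matrix.sub_mul, hP2, Matrix.one_mul,
      Matrix.mul_one, Matrix.one_mul]
    abel
  have hQt : (1 - P)ᵀ = (1 - P : Matrix (Fin dL) (Fin dL) ℝ) := by
    rw [Matrix.transpose_sub, hPt, Matrix.transpose_one]
  have hPd : ∀ i : Fin dL, 0 ≤ P i i ∧ P i i ≤ 1 := by
    intro i
    constructor
    · rw [hP, Matrix.mul_apply]
      exact Finset.sum_nonneg fun l _ => by
        rw [Matrix.transpose_apply]; exact mul_self_nonneg _
    · have h1 : ((1 - P) * (1 - P)) i i = (1 - P) i i := by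
        rw [show (1 - P : Matrix (Fin dL) (Fin dL) ℝ) * (1 - P) = 1 - P by
          rw [Matrix.mul_sub, Matrix.sub_mul, Matrix.sub_mul, hP2, Matrix.one_mul,
            Matrix.mul_one, Matrix.one_mul]
          abel]
      have h2 : ((1 - P) * (1 - P)) i i = ∑ l, ((1 - P) i l) ^ 2 := by
        rw [Matrix.mul_apply]
        refine Finset.sum_congr rfl fun l _ => ?_
        have : (1 - P) l i = (1 - P) i l := by
          calc (1 - P) l i = (1 - P)ᵀ i l := (Matrix.transpose_apply _ _ _).symm
            _ = (1 - P) i l := by rw [hQt]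
        rw [this]; ring
      have h3 : 0 ≤ (1 - P) i i := by
        rw [← h1, h2]
        exact Finset.sum_nonneg fun l _ => sq_nonneg _
      have : (1 - P : Matrix (Fin dL) (Fin dL) ℝ) i i = 1 - P i i := by
        simp [Matrix.sub_apply, Matrix.one_apply]
      linarith [this ▸ h3]
  have htrP : trace P = (k : ℝ) := by
    rw [hP, Matrix.trace_mul_comm, hOO, Matrix.trace_one]
    simp
  -- the diagonal weights
  set a : Fin d0 → ℝ := fun j => if (j : ℕ) < dL then sv j ^ 2 else 0 with ha
  set t : Fin d0 → ℝ := fun j => if h : (j : ℕ) < dL then P ⟨j, h⟩ ⟨j, h⟩ else 0 with ht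
  have ha0 : ∀ j, 0 ≤ a j := fun j => by
    rw [ha]; dsimp only; split
    · exact sq_nonneg _
    · exact le_refl 0
  have hamono : ∀ i j : Fin d0, (i : ℕ) ≤ (j : ℕ) → a j ≤ a i := by
    intro i j hij
    rw [ha]; dsimp only
    by_cases hj : (j : ℕ) < dL
    · rw [if_pos hj, if_pos (lt_of_le_of_lt hij hj)]
      have := hsv_mono i j hij
      nlinarith [hsv_nonneg i, hsv_nonneg j]
    · rw [if_neg hj]
      split
      · exact sq_nonneg _
      · exact le_refl 0
  have ht0 : ∀ j, 0 ≤ t j := fun j => by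
    rw [ht]; dsimp only; split
    · exact (hPd _).1
    · exact le_refl 0
  have ht1 : ∀ j, t j ≤ 1 := fun j => by
    rw [ht]; dsimp only; split
    · exact (hPd _).2
    · exact zero_le_one
  have htsum : ∑ j, t j ≤ (r : ℝ) := by
    have h1 : ∑ j : Fin d0, t j ≤ ∑ i : Fin dL, P i i := by
      have e1 : ∀ j : Fin d0, t j = ∑ i : Fin dL, if (i : ℕ) = (j : ℕ) then P i i else 0 := by
        intro j
        rw [dcollapse' j (fun i => P i i), ht]
      rw [show ∑ j, t j = ∑ j : Fin d0, ∑ i : Fin dL,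
          (if (i : ℕ) = (j : ℕ) then P i i else 0) from Finset.sum_congr rfl fun j _ => e1 j]
      rw [Finset.sum_comm]
      refine Finset.sum_le_sum fun i _ => ?_
      rw [collapse i (fun l => P i i)]
      split
      · exact le_refl _
      · exact (hPd i).1
    have h2 : ∑ i : Fin dL, P i i = (k : ℝ) := htrP
    calc ∑ j, t j ≤ (k : ℝ) := h2 ▸ h1
      _ ≤ (r : ℝ) := Nat.cast_le.mpr hk
  have hkey : ∑ j, a j * t j ≤ ∑ j : Fin d0, (if (j : ℕ) < r then a j else 0) :=
    kyfan a t hamono ha0 ht0 ht1 htsum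
  have h1P : frobSq ((1 - P) * D) = (∑ j, a j) - ∑ j, a j * t j := by
    rw [frobSq_eq_trace]
    have e1 : ((1 - P) * D)ᵀ * ((1 - P) * D) = Dᵀ * ((1 - P) * D) := by
      rw [Matrix.transpose_mul, hQt, Matrix.mul_assoc, ← Matrix.mul_assoc (1 - P) (1 - P) D,
        hQidem]
    rw [e1]
    have e2 : Dᵀ * ((1 - P) * D)
        = Dᵀ * ((1 : Matrix (Fin dL) (Fin dL) ℝ) * D) - Dᵀ * (P * D) := by
      rw [← Matrix.mul_sub, ← Matrix.sub_mul]
    rw [e2, Matrix.trace_sub, hD, trace_pdiag_conj sv (1 : Matrix (Fin dL) (Fin dL) ℝ),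
      trace_pdiag_conj sv P]
    rw [← Finset.sum_sub_distrib]
    congr 1
    rw [← Finset.sum_sub_distrib]
    refine Finset.sum_congr rfl fun j _ => ?_
    rw [ha, ht]
    dsimp only
    by_cases h : (j : ℕ) < dL
    · simp only [dif_pos h, if_pos h, Matrix.one_apply_eq]
      ring
    · simp only [dif_neg h, if_neg h]
      ring
  have hdecomp : D - C = (1 - P) * D + P * (D - C) := by
    rw [Matrix.sub_mul, Matrix.mul_sub, Matrix.one_mul, hPC]
    abel
  have horth : ((1 - P) * D)ᵀ * (P * (D - C)) = 0 := by
    rw [Matrix.transpose_mul, hQt, Matrix.mul_assoc, ← Matrix.mul_assoc (1 - P) P (D - C)]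
    rw [show (1 - P) * P = (0 : Matrix (Fin dL) (Fin dL) ℝ) by
      rw [Matrix.sub_mul, Matrix.one_mul, hP2]; abel]
    rw [Matrix.zero_mul, Matrix.mul_zero]
  have hpyth : frobSq (D - C) = frobSq ((1 - P) * D) + frobSq (P * (D - C)) := by
    have h0 := frob_orth_add _ _ horth
    rw [← hdecomp] at h0
    exact h0
  have hge : frobSq ((1 - P) * D) ≤ frobSq (D - C) := by
    rw [hpyth]
    linarith [frobSq_nonneg (P * (D - C))]
  have hfdr : frobSq (D - pdiagTrunc dL d0 sv r)
      = (∑ j : Fin d0, a j) - ∑ j : Fin d0, (if (j : ℕ) < r then a j else 0) := by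
    have hentry : ∀ (i : Fin dL) (j : Fin d0), (D - pdiagTrunc dL d0 sv r) i j ^ 2
        = if (i : ℕ) = (j : ℕ) then (if (i : ℕ) < r then 0 else sv i ^ 2) else 0 := by
      intro i j
      rw [Matrix.sub_apply, hD]
      simp only [pdiag, pdiagTrunc, Matrix.of_apply]
      by_cases h1 : (i : ℕ) = (j : ℕ)
      · by_cases h2 : (i : ℕ) < r
        · rw [if_pos h1, if_pos ⟨h1, h2⟩, if_pos h1, if_pos h2]
          ring
        · rw [if_pos h1, if_neg (fun hc => h2 hc.2), if_pos h1, if_neg h2]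
          ring
      · rw [if_neg h1, if_neg (fun hc => h1 hc.1), if_neg h1]
        ring
    rw [frobSq]
    rw [show ∑ i : Fin dL, ∑ j : Fin d0, (D - pdiagTrunc dL d0 sv r) i j ^ 2
        = ∑ i : Fin dL, (if (i : ℕ) < d0 then (if (i : ℕ) < r then 0 else sv i ^ 2) else 0) from
      Finset.sum_congr rfl fun i _ => by
        rw [show ∑ j : Fin d0, (D - pdiagTrunc dL d0 sv r) i j ^ 2
            = ∑ j : Fin d0, if (i : ℕ) = (j : ℕ)
                then (if (i : ℕ) < r then 0 else sv i ^ 2) else 0 from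
          Finset.sum_congr rfl fun j _ => hentry i j]
        exact collapse i (fun m => if (i : ℕ) < r then 0 else sv i ^ 2)]
    rw [sum_swap_tri (fun m => if m < r then 0 else sv m ^ 2)]
    rw [← Finset.sum_sub_distrib]
    refine Finset.sum_congr rfl fun j _ => ?_
    rw [ha]
    dsimp only
    split_ifs <;> ring
  rw [← hD, hfdr, h1P] at *
  linarith


lemma ey {dL d0 r : ℕ} (U : Matrix (Fin dL) (Fin dL) ℝ) (V : Matrix (Fin d0) (Fin d0) ℝ)
    (sv : ℕ → ℝ) (hU : Uᵀ * U = 1) (hV : Vᵀ * V = 1)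
    (hsv_mono : ∀ i j : ℕ, i ≤ j → sv j ≤ sv i) (hsv_nonneg : ∀ i, 0 ≤ sv i)
    (B : Matrix (Fin dL) (Fin d0) ℝ) (hB : B.rank ≤ r) :
    frobSq (U * pdiag dL d0 sv * Vᵀ - U * pdiagTrunc dL d0 sv r * Vᵀ)
      ≤ frobSq (U * pdiag dL d0 sv * Vᵀ - B) := by
  have hU' : U * Uᵀ = 1 := mul_eq_one_comm.mp hU
  have hV' : V * Vᵀ = 1 := mul_eq_one_comm.mp hV
  set C : Matrix (Fin dL) (Fin d0) ℝ := Uᵀ * B * V with hC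
  have hBC : B = U * C * Vᵀ := by
    rw [hC, ← Matrix.mul_assoc, ← Matrix.mul_assoc, hU', Matrix.one_mul, Matrix.mul_assoc,
      hV', Matrix.mul_one]
  have hCrank : C.rank ≤ r := by
    calc C.rank ≤ (Uᵀ * B).rank := Matrix.rank_mul_le_left _ _
      _ ≤ B.rank := Matrix.rank_mul_le_right _ _
      _ ≤ r := hB
  have e1 : U * pdiag dL d0 sv * Vᵀ - U * pdiagTrunc dL d0 sv r * Vᵀ
      = U * (pdiag dL d0 sv - pdiagTrunc dL d0 sv r) * Vᵀ := by
    rw [Matrix.mul_sub, Matrix.sub_mul]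
  have e2 : U * pdiag dL d0 sv * Vᵀ - B = U * (pdiag dL d0 sv - C) * Vᵀ := by
    rw [hBC, Matrix.mul_sub, Matrix.sub_mul]
  rw [e1, e2, frobSq_conj U V hU hV, frobSq_conj U V hU hV]
  exact ey_diag sv hsv_mono hsv_nonneg C hCrank

lemma expand_obj {G : Type*} [Group G] [Fintype G] {d0 dL n : ℕ}
    (ρ : G →* Matrix (Fin d0) (Fin d0) ℝ)
    (X : Matrix (Fin d0) (Fin n) ℝ) (Y : Matrix (Fin dL) (Fin n) ℝ)
    (Q : Matrix (Fin d0) (Fin d0) ℝ) (hQt : Qᵀ = Q) (hQdet : IsUnit Q.det)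
    (hQsq : Q * Q = ∑ g : G, ρ g * (X * Xᵀ) * (ρ g)ᵀ)
    (W : Matrix (Fin dL) (Fin d0) ℝ) :
    ∑ g : G, frobSq (W * ρ g * X - Y)
      = frobSq (W * Q - Y * Xᵀ * (∑ g : G, ρ g)ᵀ * Q⁻¹)
        + ((Fintype.card G : ℝ) * frobSq Y
            - frobSq (Y * Xᵀ * (∑ g : G, ρ g)ᵀ * Q⁻¹)) := by
  set S : Matrix (Fin d0) (Fin d0) ℝ := ∑ g : G, ρ g with hS
  set Z : Matrix (Fin dL) (Fin d0) ℝ := Y * Xᵀ * Sᵀ * Q⁻¹ with hZ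
  have hZt : Zᵀ = Q⁻¹ * (S * (X * Yᵀ)) := by
    rw [hZ, Matrix.transpose_mul, Matrix.transpose_mul, Matrix.transpose_mul,
      Matrix.transpose_nonsing_inv, hQt, Matrix.transpose_transpose, Matrix.transpose_transpose]
  have h1 : ∀ g : G, frobSq (W * ρ g * X - Y)
      = trace (W * (ρ g * (X * Xᵀ) * (ρ g)ᵀ) * Wᵀ) - trace (W * (ρ g * (X * Yᵀ)))
        - trace (Y * (Xᵀ * ((ρ g)ᵀ * Wᵀ))) + trace (Y * Yᵀ) := by
    intro g
    rw [frobSq_eq_trace']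
    rw [Matrix.transpose_sub, Matrix.sub_mul, Matrix.mul_sub, Matrix.mul_sub,
      Matrix.trace_sub, Matrix.trace_sub, Matrix.trace_sub]
    simp only [Matrix.transpose_mul, Matrix.mul_assoc]
    ring
  rw [Finset.sum_congr rfl fun g _ => h1 g]
  have h2 : ∑ g : G, (trace (W * (ρ g * (X * Xᵀ) * (ρ g)ᵀ) * Wᵀ) - trace (W * (ρ g * (X * Yᵀ)))
        - trace (Y * (Xᵀ * ((ρ g)ᵀ * Wᵀ))) + trace (Y * Yᵀ))
      = trace (W * (Q * Q) * Wᵀ) - trace (W * (S * (X * Yᵀ)))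
        - trace (Y * (Xᵀ * (Sᵀ * Wᵀ))) + (Fintype.card G : ℝ) * trace (Y * Yᵀ) := by
    rw [Finset.sum_add_distrib, Finset.sum_sub_distrib, Finset.sum_sub_distrib]
    congr 1
    · congr 1
      · congr 1
        · rw [← Matrix.trace_sum]
          congr 1
          rw [hQsq, Matrix.mul_sum, Matrix.sum_mul]
        · rw [← Matrix.trace_sum]
          congr 1
          rw [hS, Matrix.sum_mul, Matrix.mul_sum]
      · rw [← Matrix.trace_sum]
        congr 1
        rw [hS, Matrix.transpose_sum, Matrix.sum_mul, Matrix.mul_sum, Matrix.mul_sum]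
    · rw [Finset.sum_const]
      simp
  rw [h2]
  have h3 : frobSq (W * Q - Z) = trace (W * (Q * Q) * Wᵀ) - trace (W * (S * (X * Yᵀ)))
      - trace (Y * (Xᵀ * (Sᵀ * Wᵀ))) + frobSq Z := by
    rw [frobSq_eq_trace', Matrix.transpose_sub, Matrix.sub_mul, Matrix.mul_sub, Matrix.mul_sub,
      Matrix.trace_sub, Matrix.trace_sub, Matrix.trace_sub]
    have e1 : trace (W * Q * (W * Q)ᵀ) = trace (W * (Q * Q) * Wᵀ) := by
      rw [Matrix.transpose_mul, hQt]
      simp only [Matrix.mul_assoc]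
    have e2 : trace (W * Q * Zᵀ) = trace (W * (S * (X * Yᵀ))) := by
      rw [hZt, Matrix.mul_assoc, Matrix.mul_nonsing_inv_cancel_left _ _ hQdet]
    have e3 : trace (Z * (W * Q)ᵀ) = trace (Y * (Xᵀ * (Sᵀ * Wᵀ))) := by
      rw [Matrix.transpose_mul, hZ, hQt]
      rw [show Y * Xᵀ * Sᵀ * Q⁻¹ * (Q * Wᵀ) = Y * Xᵀ * Sᵀ * (Q⁻¹ * (Q * Wᵀ)) by
        simp only [Matrix.mul_assoc]]
      rw [Matrix.nonsing_inv_mul_cancel_left _ _ hQdet]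
      simp only [Matrix.mul_assoc]
    rw [e1, e2, e3, frobSq_eq_trace']
    ring
  rw [h3, frobSq_eq_trace' Y]
  ring

lemma frobSq_sub_comm {m n : Type*} [Fintype m] [Fintype n] (A B : Matrix m n ℝ) :
    frobSq (A - B) = frobSq (B - A) := by
  unfold frobSq
  refine Finset.sum_congr rfl fun i _ => Finset.sum_congr rfl fun j _ => ?_
  rw [Matrix.sub_apply, Matrix.sub_apply]
  ring

/-- **Proposition `global_optima_da`.** Let `G` be a finite group with a
representation `ρ` on `ℝ^{d0}` (a monoid hom into matrices), `Q` the positive definite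
square root of `Σ_g ρ(g) X Xᵀ ρ(g)ᵀ`, `Ḡ = (1/|G|) Σ_g ρ(g)`,
`Z̄ = |G| Y Xᵀ Ḡᵀ Q⁻¹` with SVD `Ū Σ̄ V̄ᵀ` (singular values nonincreasing).  Then
`Ŵ = Ū_r Σ̄_r V̄_rᵀ Q⁻¹` minimizes the data-augmented objective
`(1/(n|G|)) Σ_g ‖W ρ(g) X − Y‖_F²` over `rank W ≤ r`; moreover if `ρ` is orthogonal
then `Ŵ ρ(h) = Ŵ` for all `h ∈ G`. -/
theorem global_optima_data_augmentation {G : Type*} [Group G] [Fintype G]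
    (d0 dL n r : ℕ)
    (ρ : G →* Matrix (Fin d0) (Fin d0) ℝ)
    (X : Matrix (Fin d0) (Fin n) ℝ) (Y : Matrix (Fin dL) (Fin n) ℝ)
    (Q : Matrix (Fin d0) (Fin d0) ℝ) (hQ : Q.PosDef)
    (hQsq : Q * Q = ∑ g : G, ρ g * (X * Xᵀ) * (ρ g)ᵀ)
    (U : Matrix (Fin dL) (Fin dL) ℝ) (V : Matrix (Fin d0) (Fin d0) ℝ) (sv : ℕ → ℝ)
    (hU : Uᵀ * U = 1) (hV : Vᵀ * V = 1)
    (hsv_mono : ∀ i j : ℕ, i ≤ j → sv j ≤ sv i) (hsv_nonneg : ∀ i, 0 ≤ sv i)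
    (hSVD : (Fintype.card G : ℝ) •
        (Y * Xᵀ * ((Fintype.card G : ℝ)⁻¹ • ∑ g : G, ρ g)ᵀ * Q⁻¹)
      = U * pdiag dL d0 sv * Vᵀ) :
    (U * pdiagTrunc dL d0 sv r * Vᵀ * Q⁻¹).rank ≤ r ∧
    (∀ W : Matrix (Fin dL) (Fin d0) ℝ, W.rank ≤ r →
      (1 / ((n : ℝ) * (Fintype.card G : ℝ))) *
          ∑ g : G, frobSq ((U * pdiagTrunc dL d0 sv r * Vᵀ * Q⁻¹) * ρ g * X - Y)
        ≤ (1 / ((n : ℝ) * (Fintype.card G : ℝ))) * ∑ g : G, frobSq (W * ρ g * X - Y)) ∧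
    ((∀ g : G, (ρ g)ᵀ * ρ g = 1) →
      ∀ h : G, (U * pdiagTrunc dL d0 sv r * Vᵀ * Q⁻¹) * ρ h
        = U * pdiagTrunc dL d0 sv r * Vᵀ * Q⁻¹) := by
  classical
  have hQt : Qᵀ = Q := by
    have h0 := hQ.isHermitian
    rw [Matrix.IsHermitian, Matrix.conjTranspose_eq_transpose_of_trivial] at h0
    exact h0
  have hQdet : IsUnit Q.det := hQ.det_pos.ne'.isUnit
  have hGne : Nonempty G := ⟨1⟩
  have hcard : (Fintype.card G : ℝ) ≠ 0 := Nat.cast_ne_zero.mpr Fintype.card_ne_zero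
  have hZeq : Y * Xᵀ * (∑ g : G, ρ g)ᵀ * Q⁻¹ = U * pdiag dL d0 sv * Vᵀ := by
    rw [← hSVD, Matrix.transpose_smul, Matrix.mul_smul, Matrix.smul_mul, smul_smul,
      mul_inv_cancel₀ hcard, one_smul]
  -- rank bound
  have hrankDr : (pdiagTrunc dL d0 sv r).rank ≤ r := by
    set E : Matrix (Fin dL) (Fin r) ℝ :=
      Matrix.of (fun i a => if (i : ℕ) = (a : ℕ) then 1 else 0) with hE
    set F : Matrix (Fin r) (Fin d0) ℝ :=
      Matrix.of (fun a j => if (a : ℕ) = (j : ℕ) then sv a else 0) with hF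
    have hEF : pdiagTrunc dL d0 sv r = E * F := by
      ext i j
      rw [Matrix.mul_apply]
      rw [show (∑ a : Fin r, E i a * F a j)
          = ∑ a : Fin r, if (i : ℕ) = (a : ℕ)
              then (if (a : ℕ) = (j : ℕ) then sv a else 0) else 0 from
        Finset.sum_congr rfl fun a _ => by
          rw [hE, hF]
          simp only [Matrix.of_apply]
          split_ifs <;> simp]
      rw [dcollapse i (fun a => if (a : ℕ) = (j : ℕ) then sv a else 0)]
      simp only [pdiagTrunc, Matrix.of_apply]
      by_cases h : (i : ℕ) < r
      · rw [dif_pos h]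
        by_cases h2 : (i : ℕ) = (j : ℕ)
        · rw [if_pos ⟨h2, h⟩]
          simp [h2]
        · rw [if_neg (fun hc => h2 hc.1)]
          simp [h2]
      · rw [dif_neg h, if_neg (fun hc => h hc.2)]
    rw [hEF]
    refine (Matrix.rank_mul_le_right E F).trans ?_
    simpa using Matrix.rank_le_card_height F
  have hrank1 : (U * pdiagTrunc dL d0 sv r * Vᵀ * Q⁻¹).rank ≤ r := by
    calc (U * pdiagTrunc dL d0 sv r * Vᵀ * Q⁻¹).rank
        ≤ (U * pdiagTrunc dL d0 sv r * Vᵀ).rank := Matrix.rank_mul_le_left _ _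
      _ ≤ (U * pdiagTrunc dL d0 sv r).rank := Matrix.rank_mul_le_left _ _
      _ ≤ (pdiagTrunc dL d0 sv r).rank := Matrix.rank_mul_le_right _ _
      _ ≤ r := hrankDr
  have hWhatQ : (U * pdiagTrunc dL d0 sv r * Vᵀ * Q⁻¹) * Q = U * pdiagTrunc dL d0 sv r * Vᵀ :=
    Matrix.nonsing_inv_mul_cancel_right _ _ hQdet
  refine ⟨hrank1, ?_, ?_⟩
  · intro W hW
    have hnn : (0 : ℝ) ≤ 1 / ((n : ℝ) * (Fintype.card G : ℝ)) := by positivity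
    refine mul_le_mul_of_nonneg_left ?_ hnn
    rw [expand_obj ρ X Y Q hQt hQdet hQsq, expand_obj ρ X Y Q hQt hQdet hQsq]
    refine add_le_add_left ?_ _
    rw [hZeq, hWhatQ]
    rw [frobSq_sub_comm (U * pdiagTrunc dL d0 sv r * Vᵀ), frobSq_sub_comm (W * Q)]
    exact ey U V sv hU hV hsv_mono hsv_nonneg (W * Q)
      ((Matrix.rank_mul_le_left W Q).trans hW)
  · intro horth h
    set R := ρ h with hR
    have hRt : Rᵀ * R = 1 := horth h
    have hRt' : R * Rᵀ = 1 := mul_eq_one_comm.mp hRt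
    -- Q commutes with R
    have hconj : R * Q * Rᵀ = Q := by
      have hsq : (R * Q * Rᵀ) ^ 2 = Q ^ 2 := by
        rw [pow_two, pow_two]
        calc R * Q * Rᵀ * (R * Q * Rᵀ) = R * (Q * Q) * Rᵀ := by
              rw [show R * Q * Rᵀ * (R * Q * Rᵀ) = R * Q * (Rᵀ * R) * Q * Rᵀ by
                simp only [Matrix.mul_assoc], hRt]
              simp only [Matrix.mul_one, Matrix.mul_assoc]
          _ = ∑ g : G, ρ (h * g) * (X * Xᵀ) * (ρ (h * g))ᵀ := by
              rw [hQsq, Matrix.mul_sum, Matrix.sum_mul]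
              refine Finset.sum_congr rfl fun g _ => ?_
              rw [_root_.map_mul ρ h g, Matrix.transpose_mul, hR]
              simp only [Matrix.mul_assoc]
          _ = ∑ g : G, ρ g * (X * Xᵀ) * (ρ g)ᵀ :=
              Fintype.sum_equiv (Equiv.mulLeft h) _ _ (fun g => rfl)
          _ = Q * Q := hQsq.symm
      have hpsd : (R * Q * Rᴴ).PosSemidef := hQ.posSemidef.mul_mul_conjTranspose_same R
      have hRH : Rᴴ = Rᵀ := Matrix.conjTranspose_eq_transpose_of_trivial R
      rw [hRH] at hpsd
      open scoped MatrixOrder in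
      exact (CFC.sq_eq_sq_iff _ _ hpsd.nonneg hQ.posSemidef.nonneg).mp hsq
    have hcomm : R * Q = Q * R := by
      calc R * Q = R * Q * (Rᵀ * R) := by rw [hRt, Matrix.mul_one]
        _ = (R * Q * Rᵀ) * R := by simp only [Matrix.mul_assoc]
        _ = Q * R := by rw [hconj]
    have hcommInv : Q⁻¹ * R = R * Q⁻¹ := by
      have e : Q⁻¹ * (R * Q) * Q⁻¹ = Q⁻¹ * R := by
        rw [← Matrix.mul_assoc Q⁻¹ R Q, Matrix.mul_nonsing_inv_cancel_right _ _ hQdet]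
      calc Q⁻¹ * R = Q⁻¹ * (R * Q) * Q⁻¹ := e.symm
        _ = Q⁻¹ * (Q * R) * Q⁻¹ := by rw [hcomm]
        _ = R * Q⁻¹ := by
            rw [← Matrix.mul_assoc, Matrix.nonsing_inv_mul _ hQdet, Matrix.one_mul]
    -- Sᵀ R = Sᵀ
    have hRinv : Rᵀ = ρ h⁻¹ := by
      have h1 : R * ρ h⁻¹ = 1 := by
        rw [hR, ← _root_.map_mul ρ h h⁻¹, mul_inv_cancel, _root_.map_one ρ]
      calc Rᵀ = Rᵀ * (R * ρ h⁻¹) := by rw [h1, Matrix.mul_one]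
        _ = (Rᵀ * R) * ρ h⁻¹ := by rw [Matrix.mul_assoc]
        _ = ρ h⁻¹ := by rw [hRt, Matrix.one_mul]
    have hRS : Rᵀ * (∑ g : G, ρ g) = ∑ g : G, ρ g := by
      rw [hRinv, Finset.mul_sum]
      rw [show (∑ g : G, ρ h⁻¹ * ρ g) = ∑ g : G, ρ (h⁻¹ * g) by
        exact Finset.sum_congr rfl fun g _ => (map_mul ρ h⁻¹ g).symm]
      exact Fintype.sum_equiv (Equiv.mulLeft h⁻¹) _ _ (fun g => rfl)
    have hSR : (∑ g : G, ρ g)ᵀ * R = (∑ g : G, ρ g)ᵀ := by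
      have := congrArg Matrix.transpose hRS
      rw [Matrix.transpose_mul, Matrix.transpose_transpose] at this
      exact this
    -- Z R = Z
    have hZR : U * pdiag dL d0 sv * Vᵀ * R = U * pdiag dL d0 sv * Vᵀ := by
      rw [← hZeq]
      calc Y * Xᵀ * (∑ g : G, ρ g)ᵀ * Q⁻¹ * R
          = Y * Xᵀ * (∑ g : G, ρ g)ᵀ * (Q⁻¹ * R) := by simp only [Matrix.mul_assoc]
        _ = Y * Xᵀ * (∑ g : G, ρ g)ᵀ * (R * Q⁻¹) := by rw [hcommInv]
        _ = Y * Xᵀ * ((∑ g : G, ρ g)ᵀ * R) * Q⁻¹ := by simp only [Matrix.mul_assoc]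
        _ = Y * Xᵀ * (∑ g : G, ρ g)ᵀ * Q⁻¹ := by rw [hSR]
    -- cancel U
    have hDV : pdiag dL d0 sv * (Vᵀ * R) = pdiag dL d0 sv * Vᵀ := by
      have h1 : U * (pdiag dL d0 sv * (Vᵀ * R)) = U * (pdiag dL d0 sv * Vᵀ) := by
        have := hZR
        simp only [Matrix.mul_assoc] at this
        exact this
      calc pdiag dL d0 sv * (Vᵀ * R)
          = (Uᵀ * U) * (pdiag dL d0 sv * (Vᵀ * R)) := by rw [hU, Matrix.one_mul]
        _ = Uᵀ * (U * (pdiag dL d0 sv * (Vᵀ * R))) := by rw [Matrix.mul_assoc]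
        _ = Uᵀ * (U * (pdiag dL d0 sv * Vᵀ)) := by rw [h1]
        _ = (Uᵀ * U) * (pdiag dL d0 sv * Vᵀ) := by rw [Matrix.mul_assoc]
        _ = pdiag dL d0 sv * Vᵀ := by rw [hU, Matrix.one_mul]
    -- Dr = Fl * D
    set Fl : Matrix (Fin dL) (Fin dL) ℝ :=
      Matrix.of (fun i l => if (i : ℕ) = (l : ℕ) ∧ (i : ℕ) < r then 1 else 0) with hFl
    have hDr : pdiagTrunc dL d0 sv r = Fl * pdiag dL d0 sv := by
      ext i j
      rw [Matrix.mul_apply]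
      rw [show (∑ l : Fin dL, Fl i l * pdiag dL d0 sv l j)
          = ∑ l : Fin dL, if (i : ℕ) = (l : ℕ)
              then (if (i : ℕ) < r then pdiag dL d0 sv l j else 0) else 0 from
        Finset.sum_congr rfl fun l _ => by
          rw [hFl]
          simp only [Matrix.of_apply]
          by_cases h1 : (i : ℕ) = (l : ℕ)
          · by_cases h2 : (i : ℕ) < r
            · rw [if_pos ⟨h1, h2⟩, if_pos h1, if_pos h2, one_mul]
            · rw [if_neg (fun hc => h2 hc.2), if_pos h1, if_neg h2, zero_mul]
          · rw [if_neg (fun hc => h1 hc.1), if_neg h1, zero_mul]]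
      rw [dcollapse i (fun l => if (i : ℕ) < r then pdiag dL d0 sv l j else 0)]
      rw [dif_pos i.isLt]
      simp only [pdiag, pdiagTrunc, Matrix.of_apply]
      by_cases h1 : (i : ℕ) < r
      · rw [if_pos h1]
        by_cases h2 : (i : ℕ) = (j : ℕ)
        · rw [if_pos ⟨h2, h1⟩, if_pos h2]
        · rw [if_neg (fun hc => h2 hc.1), if_neg h2]
      · rw [if_neg h1, if_neg (fun hc => h1 hc.2)]
    -- conclude
    calc U * pdiagTrunc dL d0 sv r * Vᵀ * Q⁻¹ * R
        = U * pdiagTrunc dL d0 sv r * Vᵀ * (R * Q⁻¹) := by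
          rw [Matrix.mul_assoc _ Q⁻¹ R, hcommInv]
      _ = U * (Fl * (pdiag dL d0 sv * (Vᵀ * R))) * Q⁻¹ := by
          rw [hDr]
          simp only [Matrix.mul_assoc]
      _ = U * (Fl * (pdiag dL d0 sv * Vᵀ)) * Q⁻¹ := by rw [hDV]
      _ = U * pdiagTrunc dL d0 sv r * Vᵀ * Q⁻¹ := by
          rw [hDr]
          simp only [Matrix.mul_assoc]
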